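/- arXiv:2401.17817 — 9 statements merged into one kernel-verified Lean document; each statement's English description precedes it below -/
import Mathlib

section
/- Let D be a multipartite tournament and let u and v be two non-sink vertices belonging to distinct partite sets of D with (u,v) an arc of D. Then the following are equivalent: (i) u and v are not adjacent in the (1,2)-step competition graph C_{1,2}(D); (ii) either v is the unique out-neighbor of u, or else N⁺(u) ∩ N⁺(v) = ∅ and there exists a partite set X of D such that N⁺(v) ⊆ X and N⁺(u) ⊆ X ∪ {v}. -/
/-- Adjacency in the (1,2)-step competition graph `C_{1,2}(D)` of the (simple) digraph `D`
with arc relation `A`: there is a vertex `w` distinct from `u` and `v` such that either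
(`d_{D-v}(u,w) ≤ 1` and `d_{D-u}(v,w) ≤ 2`) or (`d_{D-u}(v,w) ≤ 1` and `d_{D-v}(u,w) ≤ 2`). -/
def CompAdj {V : Type*} (A : V → V → Prop) (u v : V) : Prop :=
  u ≠ v ∧ ∃ w, w ≠ u ∧ w ≠ v ∧
    ((A u w ∧ (A v w ∨ ∃ z, z ≠ u ∧ A v z ∧ A z w)) ∨
     (A v w ∧ (A u w ∨ ∃ z, z ≠ v ∧ A u z ∧ A z w)))

/-- The (1,2)-step competition graph `C_{1,2}(D)` of the digraph with arc relation `A`. -/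
def compGraph {V : Type*} (A : V → V → Prop) : SimpleGraph V where
  Adj := CompAdj A
  symm := by
    constructor
    rintro u v ⟨hne, w, h1, h2, h3⟩
    exact ⟨hne.symm, w, h2, h1, h3.symm⟩
  loopless := by constructor; rintro u ⟨hne, -⟩; exact hne rfl

/-- Vertices `u` and `v` `(1,2)`-compete in the digraph with arc relation `A`: there is a
vertex `w` distinct from `u` and `v` such that either (`u → w` and there is a directed path
of length 2 from `v` to `w` not traversing `u`) or vice versa. -/
def OneTwoCompete {V : Type*} (A : V → V → Prop) (u v : V) : Prop :=
  ∃ w, w ≠ u ∧ w ≠ v ∧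
    ((A u w ∧ ∃ z, z ≠ u ∧ A v z ∧ A z w) ∨
     (A v w ∧ ∃ z, z ≠ v ∧ A u z ∧ A z w))

/-- `A` is an orientation of the complete multipartite graph whose parts are the fibres of
`p : V → ι`: no arcs within a part, and exactly one arc between any two vertices in
different parts. -/
def IsCompleteMultipartiteOrientation {V ι : Type*} (A : V → V → Prop) (p : V → ι) : Prop :=
  (∀ u v : V, p u = p v → ¬ A u v) ∧
  ∀ u v : V, p u ≠ p v → (A u v ∨ A v u) ∧ ¬ (A u v ∧ A v u)

/-- A multipartite tournament: an orientation of a complete `k`-partite graph with `k ≥ 3`,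
whose partite sets are the (nonempty) fibres of `p : V → ι`. -/
def IsMultipartiteTournament {V ι : Type*} [Fintype ι] (A : V → V → Prop) (p : V → ι) : Prop :=
  Function.Surjective p ∧ 3 ≤ Fintype.card ι ∧ IsCompleteMultipartiteOrientation A p

/-- A multipartite tournament is tight if every partite set is a clique in `C_{1,2}(D)`. -/
def IsTight {V ι : Type*} (A : V → V → Prop) (p : V → ι) : Prop :=
  ∀ u v : V, u ≠ v → p u = p v → CompAdj A u v

/-- A tournament: an orientation of a complete graph. -/
def IsTournament {V : Type*} (A : V → V → Prop) : Prop :=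
  (∀ u, ¬ A u u) ∧ ∀ u v : V, u ≠ v → (A u v ∨ A v u) ∧ ¬ (A u v ∧ A v u)

/-!
If `u → v` and `u`, `v` are not adjacent in `C_{1,2}(D)`, they have no common out-neighbour, and
every out-neighbour `z` of `v` lies in the same part as every out-neighbour `w ≠ v` of `u`:
otherwise `z` and `w` are joined by an arc, and either `v → z → w` or `u → w → z` is a path
making `u` and `v` compete. Fixing one out-neighbour of `v`, all of `N⁺(u) \ {v}` and `N⁺(v)`
lie in one part `X`, or `N⁺(u) = {v}`. Conversely, when `N⁺(v) ⊆ X` and `N⁺(u) ⊆ X ∪ {v}`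
there are no arcs inside `X`, so none of the required 2-paths exists.
-/

section

variable {V ι : Type*} {A : V → V → Prop} {p : V → ι} {u v : V}

theorem not_compAdj_of_forall_arc_iff_eq (h : ∀ w, A u w ↔ w = v) : ¬ CompAdj A u v := by
  rintro ⟨-, w, -, hwv, ⟨huw, -⟩ | ⟨-, huw | ⟨z, hzv, huz, -⟩⟩⟩
  · exact hwv ((h w).1 huw)
  · exact hwv ((h w).1 huw)
  · exact hzv ((h z).1 huz)

namespace IsCompleteMultipartiteOrientation

theorem ne_of_arc (hA : IsCompleteMultipartiteOrientation A p) {a b : V} (h : A a b) :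
    a ≠ b := by
  rintro rfl
  exact hA.1 a a rfl h

theorem not_arc_of_arc (hA : IsCompleteMultipartiteOrientation A p) {a b : V} (h : A a b) :
    ¬ A b a := by
  intro h'
  by_cases hab : p a = p b
  · exact hA.1 a b hab h
  · exact (hA.2 a b hab).2 ⟨h, h'⟩

theorem not_compAdj_of_subset_part (hA : IsCompleteMultipartiteOrientation A p) {i : ι}
    (hdisj : ∀ w, A u w → ¬ A v w) (hvX : ∀ w, A v w → p w = i)
    (huX : ∀ w, A u w → w ≠ v → p w = i) : ¬ CompAdj A u v := by
  rintro ⟨-, w, -, hwv, ⟨huw, hvw | ⟨z, -, hvz, hzw⟩⟩ | ⟨hvw, huw | ⟨z, hzv, huz, hzw⟩⟩⟩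
  · exact hdisj w huw hvw
  · exact hA.1 z w ((hvX z hvz).trans (huX w huw hwv).symm) hzw
  · exact hdisj w huw hvw
  · exact hA.1 z w ((huX z huz hzv).trans (hvX w hvw).symm) hzw

theorem not_arc_of_not_compAdj (hA : IsCompleteMultipartiteOrientation A p) (huv : u ≠ v)
    (h : ¬ CompAdj A u v) {w : V} (huw : A u w) : ¬ A v w := fun hvw =>
  h ⟨huv, w, (hA.ne_of_arc huw).symm, (hA.ne_of_arc hvw).symm, .inl ⟨huw, .inl hvw⟩⟩

theorem part_eq_of_not_compAdj (hA : IsCompleteMultipartiteOrientation A p) (harc : A u v)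
    (h : ¬ CompAdj A u v) {z w : V} (hvz : A v z) (huw : A u w) (hwv : w ≠ v) :
    p z = p w := by
  have huv := hA.ne_of_arc harc
  have hzu : z ≠ u := by
    rintro rfl
    exact hA.not_arc_of_arc harc hvz
  have hzw : z ≠ w := by
    rintro rfl
    exact hA.not_arc_of_not_compAdj huv h huw hvz
  by_contra hpart
  rcases (hA.2 z w hpart).1 with hzw' | hwz
  · exact h ⟨huv, w, (hA.ne_of_arc huw).symm, hwv, .inl ⟨huw, .inr ⟨z, hzu, hvz, hzw'⟩⟩⟩
  · exact h ⟨huv, z, hzu, (hA.ne_of_arc hvz).symm, .inr ⟨hvz, .inr ⟨w, hwv, huw, hwz⟩⟩⟩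

theorem not_compAdj_iff (hA : IsCompleteMultipartiteOrientation A p) (harc : A u v)
    (hv : ∃ w, A v w) :
    ¬ CompAdj A u v ↔
      ((∀ w, A u w ↔ w = v) ∨
       ({w | A u w} ∩ {w | A v w} = ∅ ∧
        ∃ i : ι, {w | A v w} ⊆ {w | p w = i} ∧ {w | A u w} ⊆ {w | p w = i} ∪ {v})) := by
  have huv := hA.ne_of_arc harc
  constructor
  · intro h
    by_cases hsingle : ∀ w, A u w → w = v
    · exact .inl fun w => ⟨hsingle w, fun hw => hw ▸ harc⟩
    push Not at hsingle
    obtain ⟨w₀, huw₀, hw₀v⟩ := hsingle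
    obtain ⟨z₀, hvz₀⟩ := hv
    refine .inr ⟨Set.eq_empty_iff_forall_notMem.2 fun w ⟨huw, hvw⟩ =>
      hA.not_arc_of_not_compAdj huv h huw hvw, p w₀, fun z hvz => ?_, fun w huw => ?_⟩
    · exact hA.part_eq_of_not_compAdj harc h hvz huw₀ hw₀v
    · by_cases hwv : w = v
      · exact .inr hwv
      · exact .inl ((hA.part_eq_of_not_compAdj harc h hvz₀ huw hwv).symm.trans
          (hA.part_eq_of_not_compAdj harc h hvz₀ huw₀ hw₀v))
  · rintro (hsingle | ⟨hdisj, i, hvX, huX⟩)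
    · exact not_compAdj_of_forall_arc_iff_eq hsingle
    · exact hA.not_compAdj_of_subset_part (fun w huw hvw => hdisj.subset ⟨huw, hvw⟩) hvX
        fun w huw hwv => (huX huw).resolve_right hwv

end IsCompleteMultipartiteOrientation

end

theorem stmt3_general {V ι : Type*} [Fintype ι]
    (A : V → V → Prop) (p : V → ι) (hD : IsMultipartiteTournament A p)
    (u v : V) (harc : A u v)
    (hv : ∃ w, A v w) :
    ¬ (compGraph A).Adj u v ↔
      ((∀ w, A u w ↔ w = v) ∨
       ({w | A u w} ∩ {w | A v w} = ∅ ∧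
        ∃ i : ι, {w | A v w} ⊆ {w | p w = i} ∧ {w | A u w} ⊆ {w | p w = i} ∪ {v})) :=
  hD.2.2.not_compAdj_iff harc hv

/-- Let `D` be a multipartite tournament and let `u` and `v` be two non-sink
vertices belonging to distinct partite sets of `D` with `(u,v)` an arc of `D`. Then `u` and
`v` are not adjacent in `C_{1,2}(D)` iff either `v` is the unique out-neighbor of `u`, or
`N⁺(u) ∩ N⁺(v) = ∅` and there is a partite set `X` with `N⁺(v) ⊆ X` and
`N⁺(u) ⊆ X ∪ {v}`. -/
theorem stmt3 {V ι : Type*} [Fintype V] [Fintype ι]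
    (A : V → V → Prop) (p : V → ι) (hD : IsMultipartiteTournament A p)
    (u v : V) (hdiff : p u ≠ p v) (harc : A u v)
    (hu : ∃ w, A u w) (hv : ∃ w, A v w) :
    ¬ (compGraph A).Adj u v ↔
      ((∀ w, A u w ↔ w = v) ∨
       ({w | A u w} ∩ {w | A v w} = ∅ ∧
        ∃ i : ι, {w | A v w} ⊆ {w | p w = i} ∧ {w | A u w} ⊆ {w | p w = i} ∪ {v})) :=
  stmt3_general A p hD u v harc hv
end

section
/- Let D be a multipartite tournament and let u and v be two non-sink vertices of D. Suppose that (1) v is not the only out-neighbor of u, (2) u is not the only out-neighbor of v, and (3) for any partite set X of D with N⁺(v) ⊆ X one has N⁺(u) ⊄ X ∪ {v}, and for any partite set X with N⁺(u) ⊆ X one has N⁺(v) ⊄ X ∪ {u}. Then u and v are adjacent in the (1,2)-step competition graph C_{1,2}(D). -/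
theorem Set.exists_mem_ne_of_nonempty_of_ne_singleton {α : Type*} {s : Set α} {a : α}
    (hs : s.Nonempty) (hsa : s ≠ {a}) : ∃ x ∈ s, x ≠ a := by
  by_contra! h
  exact hsa ((hs.subset_singleton_iff).1 h)

namespace IsCompleteMultipartiteOrientation

variable {V ι : Type*} {A : V → V → Prop} {p : V → ι}

theorem irrefl (hA : IsCompleteMultipartiteOrientation A p) (x : V) : ¬ A x x :=
  hA.1 x x rfl

theorem asymm (hA : IsCompleteMultipartiteOrientation A p) {x y : V} (hxy : A x y) :
    ¬ A y x :=
  fun hyx => (hA.2 x y fun h => hA.1 x y h hxy).2 ⟨hxy, hyx⟩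

theorem compAdj_of_part_ne (hA : IsCompleteMultipartiteOrientation A p) {u v w z : V}
    (huv : u ≠ v) (hw : A u w) (hwv : w ≠ v) (hz : A v z) (hzu : z ≠ u) (hp : p w ≠ p z) :
    CompAdj A u v := by
  have hwu : w ≠ u := by rintro rfl; exact hA.irrefl w hw
  have hzv : z ≠ v := by rintro rfl; exact hA.irrefl z hz
  rcases (hA.2 w z hp).1 with hwz | hzw
  · exact ⟨huv, z, hzu, hzv, Or.inr ⟨hz, Or.inr ⟨w, hwv, hw, hwz⟩⟩⟩
  · exact ⟨huv, w, hwu, hwv, Or.inl ⟨hw, Or.inr ⟨z, hzu, hz, hzw⟩⟩⟩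

end IsCompleteMultipartiteOrientation

theorem stmt4_general {V ι : Type*} [Fintype ι]
    (A : V → V → Prop) (p : V → ι) (hD : IsMultipartiteTournament A p)
    (u v : V) (huv : u ≠ v) (hu : ∃ w, A u w) (hv : ∃ w, A v w)
    (h1 : {w | A u w} ≠ {v})
    (h2 : {w | A v w} ≠ {u})
    (h3 : ∀ i : ι, {w | A v w} ⊆ {w | p w = i} → ¬ ({w | A u w} ⊆ {w | p w = i} ∪ {v}))
    (h4 : ∀ i : ι, {w | A u w} ⊆ {w | p w = i} → ¬ ({w | A v w} ⊆ {w | p w = i} ∪ {u})) :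
    (compGraph A).Adj u v := by
  obtain ⟨-, -, hA⟩ := hD
  obtain ⟨w₀, hw₀, hw₀v⟩ := Set.exists_mem_ne_of_nonempty_of_ne_singleton hu h1
  obtain ⟨z₀, hz₀, hz₀u⟩ := Set.exists_mem_ne_of_nonempty_of_ne_singleton hv h2
  by_contra hadj
  have hpart : ∀ w z, A u w → w ≠ v → A v z → z ≠ u → p w = p z :=
    fun w z hw hwv hz hzu => by_contra (hadj <| hA.compAdj_of_part_ne huv hw hwv hz hzu ·)
  have hNu : {w | A u w} ⊆ {w | p w = p z₀} ∪ {v} := fun w hw =>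
    or_iff_not_imp_right.2 fun hwv => hpart w z₀ hw hwv hz₀ hz₀u
  have hNv : {z | A v z} ⊆ {w | p w = p z₀} ∪ {u} := fun z hz =>
    or_iff_not_imp_right.2 fun hzu =>
      (hpart w₀ z hw₀ hw₀v hz hzu).symm.trans (hpart w₀ z₀ hw₀ hw₀v hz₀ hz₀u)
  by_cases hvu : A v u
  · refine h4 _ ?_ hNv
    rwa [Set.union_singleton,
      Set.subset_insert_iff_of_notMem (s := {w | A u w}) (hA.asymm hvu)] at hNu
  · refine h3 _ ?_ hNu
    rwa [Set.union_singleton, Set.subset_insert_iff_of_notMem (s := {w | A v w}) hvu] at hNv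

/-- Let `D` be a multipartite tournament and `u`, `v` two non-sink vertices
such that (1) `v` is not the only out-neighbor of `u`, (2) `u` is not the only out-neighbor
of `v`, and (3) for any partite set `X` with `N⁺(v) ⊆ X` one has `N⁺(u) ⊄ X ∪ {v}`, and
for any partite set `X` with `N⁺(u) ⊆ X` one has `N⁺(v) ⊄ X ∪ {u}`. Then `u` and `v` are
adjacent in `C_{1,2}(D)`. -/
theorem stmt4 {V ι : Type*} [Fintype V] [Fintype ι]
    (A : V → V → Prop) (p : V → ι) (hD : IsMultipartiteTournament A p)
    (u v : V) (huv : u ≠ v) (hu : ∃ w, A u w) (hv : ∃ w, A v w)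
    (h1 : {w | A u w} ≠ {v})
    (h2 : {w | A v w} ≠ {u})
    (h3 : ∀ i : ι, {w | A v w} ⊆ {w | p w = i} → ¬ ({w | A u w} ⊆ {w | p w = i} ∪ {v}))
    (h4 : ∀ i : ι, {w | A u w} ⊆ {w | p w = i} → ¬ ({w | A v w} ⊆ {w | p w = i} ∪ {u})) :
    (compGraph A).Adj u v :=
  stmt4_general A p hD u v huv hu hv h1 h2 h3 h4
end

section
/- Let D be a tight multipartite tournament. If D has a sink v, then the (1,2)-step competition graph C_{1,2}(D) is isomorphic to the disjoint union of the complete graph K_{|V(D)|−1} and an isolated vertex (namely v). -/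
/-!
A sink `v` has no out-arcs, so it can neither compete directly nor start a path of length two:
it is isolated in `C_{1,2}(D)`. Tightness then forces the partite set of `v` to be `{v}`, so every
other vertex is joined to `v`, and as `v` is a sink every such arc points into `v`. Two vertices
in different partite sets thus compete for `v`, while two in the same partite set are adjacent by
tightness.
-/

section Sink

variable {V ι : Type*} {A : V → V → Prop}

theorem not_compAdj_of_sink {v : V} (hsink : ∀ w, ¬ A v w) (y : V) : ¬ CompAdj A v y := by
  rintro ⟨-, w, -, -, ⟨hvw, -⟩ | ⟨-, hvw | ⟨z, -, hvz, -⟩⟩⟩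
  · exact hsink w hvw
  · exact hsink w hvw
  · exact hsink z hvz

theorem compAdj_of_common_out_neighbor {x y w : V} (hxy : x ≠ y) (hwx : w ≠ x) (hwy : w ≠ y)
    (hxw : A x w) (hyw : A y w) : CompAdj A x y :=
  ⟨hxy, w, hwx, hwy, Or.inl ⟨hxw, Or.inl hyw⟩⟩

theorem IsTight.part_ne_of_sink {p : V → ι} (htight : IsTight A p) {v : V}
    (hsink : ∀ w, ¬ A v w) {x : V} (hxv : x ≠ v) : p x ≠ p v := fun hpx =>
  not_compAdj_of_sink hsink x ((compGraph A).adj_symm (htight x v hxv hpx))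

theorem IsCompleteMultipartiteOrientation.arc_to_sink {p : V → ι}
    (horient : IsCompleteMultipartiteOrientation A p) {v : V} (hsink : ∀ w, ¬ A v w) {x : V}
    (hpx : p x ≠ p v) : A x v :=
  (horient.2 x v hpx).1.resolve_right (hsink x)

end Sink

theorem stmt5_general {V ι : Type*} [Fintype ι]
    (A : V → V → Prop) (p : V → ι) (hD : IsMultipartiteTournament A p)
    (htight : IsTight A p) (v : V) (hsink : ∀ w, ¬ A v w) :
    ∀ x y : V, (compGraph A).Adj x y ↔ (x ≠ y ∧ x ≠ v ∧ y ≠ v) := by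
  have hto_v : ∀ x, x ≠ v → A x v := fun x hxv =>
    hD.2.2.arc_to_sink hsink (htight.part_ne_of_sink hsink hxv)
  intro x y
  constructor
  · intro hxy
    refine ⟨hxy.ne, ?_, ?_⟩
    · rintro rfl
      exact not_compAdj_of_sink hsink y hxy
    · rintro rfl
      exact not_compAdj_of_sink hsink x hxy.symm
  · rintro ⟨hxy, hxv, hyv⟩
    by_cases hp : p x = p y
    · exact htight x y hxy hp
    · exact compAdj_of_common_out_neighbor hxy hxv.symm hyv.symm (hto_v x hxv) (hto_v y hyv)

/-- Let `D` be a tight multipartite tournament. If `D` has a sink `v`, then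
`C_{1,2}(D)` is isomorphic to the complete graph `K_{|V(D)|-1}` together with an isolated
vertex (namely `v`): two vertices are adjacent iff they are distinct and both differ
from `v`. -/
theorem stmt5 {V ι : Type*} [Fintype V] [Fintype ι]
    (A : V → V → Prop) (p : V → ι) (hD : IsMultipartiteTournament A p)
    (htight : IsTight A p) (v : V) (hsink : ∀ w, ¬ A v w) :
    ∀ x y : V, (compGraph A).Adj x y ↔ (x ≠ y ∧ x ≠ v ∧ y ≠ v) :=
  stmt5_general A p hD htight v hsink
end

section
/- Let D be a tight multipartite tournament. Then every anti-{1,2}-competing set of D (i.e., every stable set of C_{1,2}(D)) has size at most three. -/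
/-!
Members of an anti-`{1,2}`-competing set `S` lie in distinct partite sets, because each partite
set is a clique of `C_{1,2}(D)`; hence any two of them are joined by an arc. Two members with a
common out-neighbour are adjacent in `C_{1,2}(D)`, so within `S` every vertex has in-degree at
most one. Counting the arcs of this tournament by their heads gives `|S|(|S| - 1)/2 ≤ |S|`,
that is `|S| ≤ 3`.
-/

theorem Finset.card_le_three_of_total_of_inDegree_le_one {α : Type*} (R : α → α → Prop)
    (S : Finset α) (htotal : ∀ x ∈ S, ∀ y ∈ S, x ≠ y → R x y ∨ R y x)
    (hin : ∀ x ∈ S, ∀ y ∈ S, ∀ z ∈ S, x ≠ z → y ≠ z → R x z → R y z → x = y) :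
    S.card ≤ 3 := by
  classical
  set E := S.offDiag.filter fun e => R e.1 e.2
  have hoffDiag : S.offDiag ⊆ E ∪ E.image Prod.swap := by
    rintro ⟨x, y⟩ hxy
    obtain ⟨hx, hy, hne⟩ := Finset.mem_offDiag.mp hxy
    rcases htotal x hx y hy hne with h | h
    · exact Finset.mem_union_left _ (Finset.mem_filter.mpr ⟨hxy, h⟩)
    · refine Finset.mem_union_right _ (Finset.mem_image.mpr ⟨(y, x), ?_, rfl⟩)
      exact Finset.mem_filter.mpr ⟨Finset.mem_offDiag.mpr ⟨hy, hx, hne.symm⟩, h⟩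
  have hheads : E.card ≤ S.card := by
    refine Finset.card_le_card_of_injOn Prod.snd (fun e he => ?_) ?_
    · exact (Finset.mem_offDiag.mp (Finset.mem_filter.mp he).1).2.1
    · rintro ⟨x, z⟩ he ⟨y, z'⟩ he' (rfl : z = z')
      simp only [E, Finset.coe_filter, Set.mem_ofPred_eq, Finset.mem_offDiag] at he he'
      obtain ⟨⟨hx, hz, hxz⟩, hRx⟩ := he
      obtain ⟨⟨hy, -, hyz⟩, hRy⟩ := he'
      rw [hin x hx y hy z hz hxz hyz hRx hRy]
  have hcount : S.card * S.card - S.card ≤ 2 * S.card := by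
    calc S.card * S.card - S.card = S.offDiag.card := S.offDiag_card.symm
      _ ≤ (E ∪ E.image Prod.swap).card := Finset.card_le_card hoffDiag
      _ ≤ E.card + (E.image Prod.swap).card := Finset.card_union_le _ _
      _ ≤ E.card + E.card := Nat.add_le_add_left Finset.card_image_le _
      _ ≤ 2 * S.card := by omega
  have : S.card * S.card ≤ 3 * S.card := by omega
  nlinarith

theorem compAdj_of_common_outNeighbour {V : Type*} {A : V → V → Prop} {u v w : V}
    (huv : u ≠ v) (hwu : w ≠ u) (hwv : w ≠ v) (hu : A u w) (hv : A v w) : CompAdj A u v :=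
  ⟨huv, w, hwu, hwv, Or.inl ⟨hu, Or.inl hv⟩⟩

theorem stmt6_general {V ι : Type*} [Fintype ι]
    (A : V → V → Prop) (p : V → ι) (hD : IsMultipartiteTournament A p)
    (htight : IsTight A p) :
    ∀ S : Finset V, (∀ x ∈ S, ∀ y ∈ S, x ≠ y → ¬ (compGraph A).Adj x y) → S.card ≤ 3 := by
  intro S hS
  apply Finset.card_le_three_of_total_of_inDegree_le_one A S
  · intro x hx y hy hxy
    by_cases hp : p x = p y
    · exact absurd (htight x y hxy hp) (hS x hx y hy hxy)
    · exact (hD.2.2.2 x y hp).1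
  · intro x hx y hy z _ hxz hyz hxA hyA
    by_contra hxy
    exact hS x hx y hy hxy (compAdj_of_common_outNeighbour hxy hxz.symm hyz.symm hxA hyA)

/-- Let `D` be a tight multipartite tournament. Then every
anti-`{1,2}`-competing set of `D` (i.e., every stable set of `C_{1,2}(D)`) has size at
most three. -/
theorem stmt6 {V ι : Type*} [Fintype V] [Fintype ι]
    (A : V → V → Prop) (p : V → ι) (hD : IsMultipartiteTournament A p)
    (htight : IsTight A p) :
    ∀ S : Finset V, (∀ x ∈ S, ∀ y ∈ S, x ≠ y → ¬ (compGraph A).Adj x y) → S.card ≤ 3 :=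
  stmt6_general A p hD htight
end

section
/- Let D be a tournament with at least five vertices. If each vertex of D has outdegree at least two, then the (1,2)-step competition graph C_{1,2}(D) is complete. -/
/-
Orient an arc `u → v` and pick an out-neighbour `s ≠ v` of `u` and an out-neighbour `t` of `v`.
If `v → s`, then `s` is a common out-neighbour. Otherwise `t ∉ {u, s}`, and the arc between
`s` and `t` decides the witness: if `t → s`, then `u → s` and `v → t → s`; if `s → t`, then
`v → t` and `u → s → t`.
-/

namespace IsTournament

variable {V : Type*} {A : V → V → Prop}

theorem ne_of_arc (hT : IsTournament A) {u v : V} (huv : A u v) : u ≠ v := by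
  rintro rfl
  exact hT.1 u huv

theorem not_arc_of_arc (hT : IsTournament A) {u v : V} (huv : A u v) : ¬ A v u :=
  fun hvu => (hT.2 u v (hT.ne_of_arc huv)).2 ⟨huv, hvu⟩

theorem compAdj_of_arc (hT : IsTournament A) {u v s t : V} (huv : A u v) (hus : A u s)
    (hsv : s ≠ v) (hvt : A v t) : CompAdj A u v := by
  have hsu : s ≠ u := (hT.ne_of_arc hus).symm
  refine ⟨hT.ne_of_arc huv, ?_⟩
  by_cases hvs : A v s
  · exact ⟨s, hsu, hsv, .inl ⟨hus, .inl hvs⟩⟩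
  have htu : t ≠ u := by
    rintro rfl
    exact hT.not_arc_of_arc huv hvt
  have hne_ts : t ≠ s := by
    rintro rfl
    exact hvs hvt
  rcases (hT.2 t s hne_ts).1 with hts | hst
  · exact ⟨s, hsu, hsv, .inl ⟨hus, .inr ⟨t, htu, hvt, hts⟩⟩⟩
  · exact ⟨t, htu, (hT.ne_of_arc hvt).symm, .inr ⟨hvt, .inr ⟨s, hsv, hus, hst⟩⟩⟩

theorem compGraph_eq_top_of_forall_arc (hT : IsTournament A)
    (h : ∀ u v, A u v → CompAdj A u v) : compGraph A = ⊤ := by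
  ext u v
  refine ⟨(compGraph A).ne_of_adj, fun hne => ?_⟩
  rcases (hT.2 u v hne).1 with huv | hvu
  · exact h u v huv
  · exact (compGraph A).adj_symm (h v u hvu)

end IsTournament

theorem stmt7_general {V : Type*} (A : V → V → Prop) (hT : IsTournament A)
    (hdeg : ∀ v : V, 2 ≤ {w | A v w}.ncard) :
    compGraph A = ⊤ := by
  refine hT.compGraph_eq_top_of_forall_arc fun u v huv => ?_
  obtain ⟨s, hus, hsv⟩ := Set.exists_ne_of_one_lt_ncard (hdeg u) v
  obtain ⟨t, hvt, -⟩ := Set.exists_ne_of_one_lt_ncard (hdeg v) u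
  exact hT.compAdj_of_arc huv hus hsv hvt

/-- Let `D` be a tournament with at least five vertices. If each vertex of `D`
has outdegree at least two, then `C_{1,2}(D)` is complete. -/
theorem stmt7 {V : Type*} [Fintype V] (A : V → V → Prop) (hT : IsTournament A)
    (hcard : 5 ≤ Fintype.card V) (hdeg : ∀ v : V, 2 ≤ {w | A v w}.ncard) :
    compGraph A = ⊤ :=
  stmt7_general A hT hdeg
end

section
/- For every integer n ≥ 5, there exists a tournament D of order n whose (1,2)-step competition graph C_{1,2}(D) is complete. -/
/-!
Start from the rotational tournament on `ℤ/5` (`i → i+1, i+2`) and add vertices one at a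
time. The new vertex `∞` beats every old vertex except one fixed vertex `a`, which beats `∞`.
Old pairs keep their witnesses. For `∞` and an old vertex `v`, take an out-neighbour `w` of `v`
(it exists because `v` competes with someone): if `w ≠ a` then `∞ → w ← v`; if `w = a` then
any out-neighbour `w'` of `a` gives `∞ → w'` and `v → a → w'`.
-/

variable {V W : Type*} {A : V → V → Prop}

theorem CompAdj.map {B : W → W → Prop} {f : V → W} (hf : Function.Injective f)
    (hAB : ∀ u v, A u v → B (f u) (f v)) {u v : V} (h : CompAdj A u v) :
    CompAdj B (f u) (f v) := by
  obtain ⟨huv, w, hwu, hwv, h⟩ := h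
  refine ⟨hf.ne huv, f w, hf.ne hwu, hf.ne hwv, ?_⟩
  rcases h with ⟨huw, hvw | ⟨z, hzu, hvz, hzw⟩⟩ | ⟨hvw, huw | ⟨z, hzv, huz, hzw⟩⟩
  · exact .inl ⟨hAB _ _ huw, .inl (hAB _ _ hvw)⟩
  · exact .inl ⟨hAB _ _ huw, .inr ⟨f z, hf.ne hzu, hAB _ _ hvz, hAB _ _ hzw⟩⟩
  · exact .inr ⟨hAB _ _ hvw, .inl (hAB _ _ huw)⟩
  · exact .inr ⟨hAB _ _ hvw, .inr ⟨f z, hf.ne hzv, hAB _ _ huz, hAB _ _ hzw⟩⟩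

theorem CompAdj.exists_arc_right {u v : V} (h : CompAdj A u v) : ∃ w, A v w := by
  obtain ⟨-, w, -, -, ⟨-, hvw | ⟨z, -, hvz, -⟩⟩ | ⟨hvw, -⟩⟩ := h
  exacts [⟨w, hvw⟩, ⟨z, hvz⟩, ⟨w, hvw⟩]

theorem compGraph_eq_top_iff : compGraph A = ⊤ ↔ ∀ u v, u ≠ v → CompAdj A u v := by
  simp only [SimpleGraph.ext_iff, funext_iff, SimpleGraph.top_adj, eq_iff_iff]
  exact ⟨fun h u v huv => (h u v).2 huv, fun h u v => ⟨fun huv => huv.1, h u v⟩⟩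

theorem exists_arc_of_compGraph_eq_top [Nontrivial V] (h : compGraph A = ⊤) (v : V) :
    ∃ w, A v w := by
  obtain ⟨u, hu⟩ := exists_ne v
  exact (compGraph_eq_top_iff.1 h u v hu).exists_arc_right

theorem IsTournament.comap (f : W → V) (hf : Function.Injective f) (hA : IsTournament A) :
    IsTournament (fun x y => A (f x) (f y)) :=
  ⟨fun x => hA.1 (f x), fun _ _ hxy => hA.2 _ _ (hf.ne hxy)⟩

theorem compGraph_comap_equiv (e : W ≃ V) :
    compGraph (fun x y => A (e x) (e y)) = (compGraph A).comap e := by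
  ext x y
  refine ⟨fun h => h.map e.injective fun _ _ => id, fun h => ?_⟩
  have := (h : CompAdj A (e x) (e y)).map (B := fun x y => A (e x) (e y)) e.symm.injective
    (by simp)
  simp only [Equiv.symm_apply_apply] at this
  exact this

def addVertex (A : V → V → Prop) (a : V) : Option V → Option V → Prop
  | none, none => False
  | none, some v => v ≠ a
  | some u, none => u = a
  | some u, some v => A u v

theorem isTournament_addVertex (hA : IsTournament A) (a : V) :
    IsTournament (addVertex A a) := by
  refine ⟨fun u => ?_, fun u v huv => ?_⟩
  · cases u
    exacts [id, hA.1 _]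
  · cases u <;> cases v <;> simp only [addVertex, ne_eq, Option.some_inj] at huv ⊢
    · exact huv.elim trivial
    · tauto
    · tauto
    · exact hA.2 _ _ huv

theorem compAdj_none_addVertex (hA : IsTournament A) (hout : ∀ v, ∃ w, A v w) (a v : V) :
    CompAdj (addVertex A a) none (some v) := by
  obtain ⟨w, hwa, hpath⟩ : ∃ w, w ≠ a ∧ (A v w ∨ A v a ∧ A a w) := by
    obtain ⟨w, hvw⟩ := hout v
    by_cases hwa : w = a
    · subst hwa
      obtain ⟨w', hww'⟩ := hout w
      exact ⟨w', fun h => hA.1 w (h ▸ hww'), .inr ⟨hvw, hww'⟩⟩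
    · exact ⟨w, hwa, .inl hvw⟩
  have hwv : w ≠ v := by
    rintro rfl
    rcases hpath with hww | ⟨hwa', haw⟩
    exacts [hA.1 w hww, (hA.2 w a hwa).2 ⟨hwa', haw⟩]
  refine ⟨Option.some_ne_none v |>.symm, some w, Option.some_ne_none w, by simpa using hwv,
    .inl ⟨hwa, ?_⟩⟩
  rcases hpath with hvw | ⟨hva, haw⟩
  exacts [.inl hvw, .inr ⟨some a, Option.some_ne_none a, hva, haw⟩]

theorem compGraph_addVertex_eq_top [Nontrivial V] (hA : IsTournament A)
    (h : compGraph A = ⊤) (a : V) : compGraph (addVertex A a) = ⊤ := by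
  have hout := exists_arc_of_compGraph_eq_top h
  have hsome : ∀ u v : V, u ≠ v → CompAdj (addVertex A a) (some u) (some v) := fun u v huv =>
    (compGraph_eq_top_iff.1 h u v huv).map (Option.some_injective V) fun _ _ => id
  rw [compGraph_eq_top_iff]
  rintro (_ | u) (_ | v) huv
  · exact absurd rfl huv
  · exact compAdj_none_addVertex hA hout a v
  · exact SimpleGraph.Adj.symm (G := compGraph _) (compAdj_none_addVertex hA hout a u)
  · exact hsome u v (by simpa using huv)

def rotationalTournament5 : Fin 5 → Fin 5 → Prop := fun i j => j - i = 1 ∨ j - i = 2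

theorem isTournament_rotationalTournament5 : IsTournament rotationalTournament5 := by
  unfold IsTournament rotationalTournament5; decide

theorem compGraph_rotationalTournament5 : compGraph rotationalTournament5 = ⊤ := by
  rw [compGraph_eq_top_iff]; unfold CompAdj rotationalTournament5; decide

/-- For every integer `n ≥ 5`, there exists a tournament `D` of order `n`
whose `(1,2)`-step competition graph is complete. -/
theorem stmt8 : ∀ n : ℕ, 5 ≤ n →
    ∃ A : Fin n → Fin n → Prop, IsTournament A ∧ compGraph A = ⊤ := by
  intro n hn
  induction n, hn using Nat.le_induction with
  | base => exact ⟨_, isTournament_rotationalTournament5, compGraph_rotationalTournament5⟩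
  | succ m hm ih =>
    obtain ⟨A, hA, hC⟩ := ih
    have : Nontrivial (Fin m) := Fin.nontrivial_iff_two_le.2 (by omega)
    let e := finSuccEquiv m
    refine ⟨_, (isTournament_addVertex hA ⟨0, by omega⟩).comap e e.injective, ?_⟩
    rw [compGraph_comap_equiv, compGraph_addVertex_eq_top hA hC,
      ← SimpleGraph.completeGraph_eq_top, SimpleGraph.comap_top e.injective]
end

section
/- Let D be a multipartite tournament with at least 3 vertices whose (1,2)-step competition graph C_{1,2}(D) is complete. Then every vertex of D has outdegree at least 2. -/
/-! Every witness of `CompAdj A u v` yields an out-neighbour of `u` other than `v`. Applied to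
a pair `v, u` this gives an out-neighbour `x` of `v`, with `x ≠ v` as `D` has no loops, and
applied to the pair `v, x` a second out-neighbour `y ≠ x`. -/

theorem CompAdj.exists_arc_ne_right {V : Type*} {A : V → V → Prop} {u v : V}
    (h : CompAdj A u v) : ∃ y, y ≠ v ∧ A u y := by
  obtain ⟨-, w, -, hwv, ⟨huw, -⟩ | ⟨-, huw | ⟨z, hzv, huz, -⟩⟩⟩ := h
  · exact ⟨w, hwv, huw⟩
  · exact ⟨w, hwv, huw⟩
  · exact ⟨z, hzv, huz⟩

theorem compAdj_of_compGraph_eq_top {V : Type*} {A : V → V → Prop}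
    (hcomp : compGraph A = ⊤) {u v : V} (huv : u ≠ v) : CompAdj A u v :=
  show (compGraph A).Adj u v from hcomp ▸ huv

theorem two_le_ncard_arcs_of_compGraph_eq_top {V : Type*} [Finite V] [Nontrivial V]
    {A : V → V → Prop} (hloop : ∀ u, ¬ A u u) (hcomp : compGraph A = ⊤) (v : V) :
    2 ≤ {w | A v w}.ncard := by
  obtain ⟨u, huv⟩ := exists_ne v
  obtain ⟨x, -, hvx⟩ := (compAdj_of_compGraph_eq_top hcomp huv.symm).exists_arc_ne_right
  have hxv : x ≠ v := by rintro rfl; exact hloop x hvx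
  obtain ⟨y, hyx, hvy⟩ := (compAdj_of_compGraph_eq_top hcomp hxv.symm).exists_arc_ne_right
  exact (Set.one_lt_ncard_iff (Set.toFinite _)).mpr ⟨x, y, hvx, hvy, hyx.symm⟩

theorem IsCompleteMultipartiteOrientation.irrefl_s12 {V ι : Type*} {A : V → V → Prop}
    {p : V → ι} (hA : IsCompleteMultipartiteOrientation A p) (u : V) : ¬ A u u :=
  hA.1 u u rfl

/-- Let `D` be a multipartite tournament with at least 3 vertices whose
`(1,2)`-step competition graph is complete. Then every vertex of `D` has outdegree at
least 2. -/
theorem stmt12 {V ι : Type*} [Fintype V] [Fintype ι]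
    (A : V → V → Prop) (p : V → ι) (hD : IsMultipartiteTournament A p)
    (hcard : 3 ≤ Fintype.card V) (hcomp : compGraph A = ⊤) :
    ∀ v : V, 2 ≤ {w | A v w}.ncard := by
  have : Nontrivial V := Fintype.one_lt_card_iff_nontrivial.mp (by omega)
  exact two_le_ncard_arcs_of_compGraph_eq_top hD.2.2.irrefl_s12 hcomp
end

section
/- Let D be a tight multipartite tournament with no sinks, and suppose S = {u₁, u₂} is an anti-{1,2}-competing set of D. If the graph C_{1,2}(D) − {u₁, u₂} is not complete, then either u₂ is the unique out-neighbor of u₁ in D, or u₁ is the unique out-neighbor of u₂ in D. -/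
/-!
The partite sets are cliques of `C_{1,2}(D)`, so `u₁` and `u₂` lie in different parts, say
`u₁ → u₂`. Suppose `u₁` has another out-neighbour `w`. An arc between an out-neighbour of `u₂`
and an out-neighbour `≠ u₂` of `u₁` would make `u₁` and `u₂` `(1,2)`-compete, so all these
out-neighbours lie in one part `P` (nonempty, as `u₂` is not a sink), which contains neither
`u₁` nor `u₂`. Hence every other vertex has an arc into `{u₁, u₂}`, and any two such vertices
compete through `u₁` or `u₂` (through `u₁ → u₂` in the mixed case): `C_{1,2}(D) − {u₁, u₂}` is
complete.
-/

section

variable {V ι : Type*} {A : V → V → Prop} {p : V → ι}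

theorem CompAdj.symm {u v : V} (h : CompAdj A u v) : CompAdj A v u :=
  (compGraph A).adj_symm h

theorem compAdj_of_common_out {u v w : V} (huv : u ≠ v) (hwu : w ≠ u) (hwv : w ≠ v)
    (hu : A u w) (hv : A v w) : CompAdj A u v :=
  ⟨huv, w, hwu, hwv, .inl ⟨hu, .inl hv⟩⟩

theorem compAdj_of_arc_of_path {u v w z : V} (huv : u ≠ v) (hwu : w ≠ u) (hwv : w ≠ v)
    (hzu : z ≠ u) (hu : A u w) (hvz : A v z) (hzw : A z w) : CompAdj A u v :=
  ⟨huv, w, hwu, hwv, .inl ⟨hu, .inr ⟨z, hzu, hvz, hzw⟩⟩⟩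

theorem compAdj_of_forall_arc_to_pair {u₁ u₂ : V} (h₁₂ : A u₁ u₂)
    (hin : ∀ v, v ≠ u₁ → v ≠ u₂ → A v u₁ ∨ A v u₂) {x y : V} (hxy : x ≠ y)
    (hx₁ : x ≠ u₁) (hx₂ : x ≠ u₂) (hy₁ : y ≠ u₁) (hy₂ : y ≠ u₂) : CompAdj A x y := by
  rcases hin x hx₁ hx₂ with hx | hx <;> rcases hin y hy₁ hy₂ with hy | hy
  · exact compAdj_of_common_out hxy hx₁.symm hy₁.symm hx hy
  · exact (compAdj_of_arc_of_path hxy.symm hy₂.symm hx₂.symm hy₁.symm hy hx h₁₂).symm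
  · exact compAdj_of_arc_of_path hxy hx₂.symm hy₂.symm hx₁.symm hx hy h₁₂
  · exact compAdj_of_common_out hxy hx₂.symm hy₂.symm hx hy

namespace IsCompleteMultipartiteOrientation

variable (hA : IsCompleteMultipartiteOrientation A p)
include hA

theorem part_ne {u v : V} (h : A u v) : p u ≠ p v :=
  fun e => hA.1 u v e h

theorem ne {u v : V} (h : A u v) : u ≠ v :=
  fun e => hA.part_ne h (congrArg p e)

theorem asymm_s13 {u v : V} (h : A u v) : ¬ A v u :=
  fun h' => (hA.2 u v (hA.part_ne h)).2 ⟨h, h'⟩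

theorem arc_or_arc {u v : V} (h : p u ≠ p v) : A u v ∨ A v u :=
  (hA.2 u v h).1

end IsCompleteMultipartiteOrientation

section NonCompeting

variable (hA : IsCompleteMultipartiteOrientation A p) {u₁ u₂ : V} (hne : u₁ ≠ u₂)
  (hanti : ¬ CompAdj A u₁ u₂)
include hA hne hanti

theorem part_eq_of_not_compAdj {a b : V} (ha : A u₁ a) (ha₂ : a ≠ u₂) (hb : A u₂ b)
    (hb₁ : b ≠ u₁) : p a = p b := by
  by_contra hab
  rcases hA.arc_or_arc hab with hab | hba
  · exact hanti (compAdj_of_arc_of_path hne.symm (hA.ne hb).symm hb₁ ha₂ hb ha hab).symm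
  · exact hanti (compAdj_of_arc_of_path hne (hA.ne ha).symm ha₂ hb₁ ha hb hba)

theorem arc_to_pair_of_not_compAdj (h₁₂ : A u₁ u₂) {w z : V} (hw : A u₁ w) (hw₂ : w ≠ u₂)
    (hz : A u₂ z) (v : V) (hv₁ : v ≠ u₁) (hv₂ : v ≠ u₂) : A v u₁ ∨ A v u₂ := by
  have hz₁ : z ≠ u₁ := fun e => hA.asymm_s13 h₁₂ (e ▸ hz)
  have hpart : ∀ a, A u₁ a → a ≠ u₂ → p a = p z :=
    fun a ha ha₂ => part_eq_of_not_compAdj hA hne hanti ha ha₂ hz hz₁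
  by_contra! hin
  have h₁ : p u₁ ≠ p v → A u₁ v := fun h => (hA.arc_or_arc h).resolve_right hin.1
  have h₂ : p u₂ ≠ p v → A u₂ v := fun h => (hA.arc_or_arc h).resolve_right hin.2
  by_cases hv : p v = p z
  · refine hanti (compAdj_of_common_out hne hv₁ hv₂ (h₁ ?_) (h₂ ?_))
    · exact hv ▸ fun e => hA.part_ne hw (e.trans (hpart w hw hw₂).symm)
    · exact hv ▸ hA.part_ne hz
  · have e₁ : p u₁ = p v := by
      by_contra h
      exact hv (hpart v (h₁ h) hv₂)
    have e₂ : p u₂ = p v := by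
      by_contra h
      exact hv ((part_eq_of_not_compAdj hA hne hanti hw hw₂ (h₂ h) hv₁).symm.trans
        (hpart w hw hw₂))
    exact hA.part_ne h₁₂ (e₁.trans e₂.symm)

theorem out_eq_of_not_compAdj (h₁₂ : A u₁ u₂) (hout : ∃ z, A u₂ z) {x y : V} (hxy : x ≠ y)
    (hx₁ : x ≠ u₁) (hx₂ : x ≠ u₂) (hy₁ : y ≠ u₁) (hy₂ : y ≠ u₂) (hnc : ¬ CompAdj A x y)
    (w : V) : A u₁ w ↔ w = u₂ := by
  refine ⟨fun hw => ?_, fun e => e ▸ h₁₂⟩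
  by_contra hw₂
  obtain ⟨z, hz⟩ := hout
  exact hnc (compAdj_of_forall_arc_to_pair h₁₂
    (arc_to_pair_of_not_compAdj hA hne hanti h₁₂ hw hw₂ hz) hxy hx₁ hx₂ hy₁ hy₂)

end NonCompeting

end

theorem stmt13_general {V ι : Type*} [Fintype ι]
    (A : V → V → Prop) (p : V → ι) (hD : IsMultipartiteTournament A p)
    (htight : IsTight A p) (hnosink : ∀ x : V, ∃ w, A x w)
    (u₁ u₂ : V) (hne : u₁ ≠ u₂) (hanti : ¬ (compGraph A).Adj u₁ u₂)
    (hnoncomplete : ∃ x y : V, x ≠ y ∧ x ≠ u₁ ∧ x ≠ u₂ ∧ y ≠ u₁ ∧ y ≠ u₂ ∧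
      ¬ (compGraph A).Adj x y) :
    (∀ w, A u₁ w ↔ w = u₂) ∨ (∀ w, A u₂ w ↔ w = u₁) := by
  obtain ⟨-, -, hA⟩ := hD
  obtain ⟨x, y, hxy, hx₁, hx₂, hy₁, hy₂, hnc⟩ := hnoncomplete
  have hpart : p u₁ ≠ p u₂ := fun e => hanti (htight u₁ u₂ hne e)
  rcases hA.arc_or_arc hpart with h₁₂ | h₂₁
  · exact .inl (out_eq_of_not_compAdj hA hne hanti h₁₂ (hnosink u₂) hxy hx₁ hx₂ hy₁ hy₂ hnc)
  · exact .inr (out_eq_of_not_compAdj hA hne.symm (fun h => hanti h.symm) h₂₁ (hnosink u₁)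
      hxy hx₂ hx₁ hy₂ hy₁ hnc)

/-- Let `D` be a tight multipartite tournament with no sinks, and suppose
`S = {u₁, u₂}` is an anti-`{1,2}`-competing set of `D`. If `C_{1,2}(D) − {u₁, u₂}` is not
complete, then either `u₂` is the unique out-neighbor of `u₁`, or `u₁` is the unique
out-neighbor of `u₂`. -/
theorem stmt13 {V ι : Type*} [Fintype V] [Fintype ι]
    (A : V → V → Prop) (p : V → ι) (hD : IsMultipartiteTournament A p)
    (htight : IsTight A p) (hnosink : ∀ x : V, ∃ w, A x w)
    (u₁ u₂ : V) (hne : u₁ ≠ u₂) (hanti : ¬ (compGraph A).Adj u₁ u₂)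
    (hnoncomplete : ∃ x y : V, x ≠ y ∧ x ≠ u₁ ∧ x ≠ u₂ ∧ y ≠ u₁ ∧ y ≠ u₂ ∧
      ¬ (compGraph A).Adj x y) :
    (∀ w, A u₁ w ↔ w = u₂) ∨ (∀ w, A u₂ w ↔ w = u₁) :=
  stmt13_general A p hD htight hnosink u₁ u₂ hne hanti hnoncomplete
end

section
/- Let D be a tight multipartite tournament with no sinks, and suppose there are vertices u₁ and u₂ such that u₂ is the unique out-neighbor of u₁ in D. Then for any anti-{1,2}-competing set S of size 2 with S ∩ {u₁, u₂} = ∅, the following hold: (1) the vertices of S can be labeled v₁ and v₂ so that v₂ is the unique out-neighbor of v₁ in D; (2) with this labeling, v₁ and u₁ belong to the same partite set of D, and v₂ and u₂ belong to distinct partite sets of D. -/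
/-
Every vertex outside the part of `u₁`, other than `u₂`, beats `u₁`. If neither `v₁` nor `v₂` lay in
the part of `u₁`, both would beat `u₁` and so would compete. So say `v₁` lies in the part of `u₁`;
then `v₂` beats `u₁`. Now `v₁` cannot beat `u₂`, as `v₂` reaches `u₂` via `u₁`; hence any
out-neighbour of `v₁` other than `v₂` beats `u₁`, and `v₁`, `v₂` would compete through `u₁`.
Finally `v₁` and `u₁` compete by tightness, and since their out-neighbourhoods are `{v₂}` and
`{u₂}`, this forces an arc between `v₂` and `u₂`.
-/

lemma CompAdj.arc_or_arc_of_unique_out {V : Type*} {A : V → V → Prop} {x y x' y' : V}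
    (h : CompAdj A x y) (hx : ∀ w, A x w ↔ w = x') (hy : ∀ w, A y w ↔ w = y') (hne : x' ≠ y') :
    A x' y' ∨ A y' x' := by
  obtain ⟨-, w, -, -, ⟨hxw, hyw | ⟨z, -, hyz, hzw⟩⟩ | ⟨hyw, hxw | ⟨z, -, hxz, hzw⟩⟩⟩ := h
  · exact absurd (((hx w).1 hxw).symm.trans ((hy w).1 hyw)) hne
  · rw [(hx w).1 hxw, (hy z).1 hyz] at hzw
    exact Or.inr hzw
  · exact absurd (((hx w).1 hxw).symm.trans ((hy w).1 hyw)) hne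
  · rw [(hy w).1 hyw, (hx z).1 hxz] at hzw
    exact Or.inl hzw

namespace IsCompleteMultipartiteOrientation

variable {V ι : Type*} {A : V → V → Prop} {p : V → ι}

lemma part_ne_of_arc (hO : IsCompleteMultipartiteOrientation A p) {u v : V} (h : A u v) :
    p u ≠ p v :=
  fun hp => hO.1 u v hp h

variable {u₁ u₂ : V} (hO : IsCompleteMultipartiteOrientation A p) (hstar : ∀ w, A u₁ w ↔ w = u₂)
include hO hstar

lemma arc_to_of_part_ne {x : V} (hx : p x ≠ p u₁) (hx₂ : x ≠ u₂) : A x u₁ :=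
  (hO.2 x u₁ hx).1.resolve_right fun h => hx₂ ((hstar x).1 h)

lemma part_eq_or_part_eq_of_not_compAdj {a b : V} (hab : a ≠ b) (hnc : ¬ CompAdj A a b)
    (ha₁ : a ≠ u₁) (ha₂ : a ≠ u₂) (hb₁ : b ≠ u₁) (hb₂ : b ≠ u₂) :
    p a = p u₁ ∨ p b = p u₁ := by
  by_contra! h
  exact hnc ⟨hab, u₁, ha₁.symm, hb₁.symm,
    Or.inl ⟨hO.arc_to_of_part_ne hstar h.1 ha₂, Or.inl (hO.arc_to_of_part_ne hstar h.2 hb₂)⟩⟩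

lemma unique_out_of_not_compAdj (htight : IsTight A p) (hnosink : ∀ x : V, ∃ w, A x w)
    {a b : V} (hab : a ≠ b) (hnc : ¬ CompAdj A a b) (ha₁ : a ≠ u₁) (hb₂ : b ≠ u₂)
    (hpa : p a = p u₁) :
    ∀ w, A a w ↔ w = b := by
  have hpb : p b ≠ p u₁ := fun h => hnc (htight a b hab (hpa.trans h.symm))
  have hb₁ : b ≠ u₁ := fun h => hpb (congrArg p h)
  have hbu₁ : A b u₁ := hO.arc_to_of_part_ne hstar hpb hb₂
  have hau₂ : ¬ A a u₂ := fun h =>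
    hnc ⟨hab, u₂, fun e => hO.part_ne_of_arc h (congrArg p e.symm), hb₂.symm,
      Or.inl ⟨h, Or.inr ⟨u₁, ha₁.symm, hbu₁, (hstar u₂).2 rfl⟩⟩⟩
  have hout : ∀ y, A a y → y = b := by
    intro y hy
    by_contra hyb
    have hyu₁ : A y u₁ := hO.arc_to_of_part_ne hstar (hpa ▸ (hO.part_ne_of_arc hy).symm)
      fun e => hau₂ (e ▸ hy)
    exact hnc ⟨hab, u₁, ha₁.symm, hb₁.symm, Or.inr ⟨hbu₁, Or.inr ⟨y, hyb, hy, hyu₁⟩⟩⟩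
  obtain ⟨y, hy⟩ := hnosink a
  exact fun w => ⟨hout w, fun e => e ▸ hout y hy ▸ hy⟩

lemma part_ne_of_unique_out (htight : IsTight A p) {a b : V} (ha₁ : a ≠ u₁) (hb₂ : b ≠ u₂)
    (hpa : p a = p u₁) (hab : ∀ w, A a w ↔ w = b) :
    p b ≠ p u₂ := by
  rcases (htight a u₁ ha₁ hpa).arc_or_arc_of_unique_out hab hstar hb₂ with h | h
  · exact hO.part_ne_of_arc h
  · exact (hO.part_ne_of_arc h).symm

end IsCompleteMultipartiteOrientation

open IsCompleteMultipartiteOrientation in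
theorem stmt14_general {V ι : Type*} [Fintype ι]
    (A : V → V → Prop) (p : V → ι) (hD : IsMultipartiteTournament A p)
    (htight : IsTight A p) (hnosink : ∀ x : V, ∃ w, A x w)
    (u₁ u₂ : V) (hstar : ∀ w, A u₁ w ↔ w = u₂) :
    ∀ v₁ v₂ : V, v₁ ≠ v₂ → ¬ (compGraph A).Adj v₁ v₂ →
      v₁ ∉ ({u₁, u₂} : Set V) → v₂ ∉ ({u₁, u₂} : Set V) →
      (((∀ w, A v₁ w ↔ w = v₂) ∧ p v₁ = p u₁ ∧ p v₂ ≠ p u₂) ∨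
       ((∀ w, A v₂ w ↔ w = v₁) ∧ p v₂ = p u₁ ∧ p v₁ ≠ p u₂)) := by
  obtain ⟨-, -, hO⟩ := hD
  intro v₁ v₂ hne hnadj hv₁ hv₂
  have hnc : ¬ CompAdj A v₁ v₂ := hnadj
  simp only [Set.mem_insert_iff, Set.mem_singleton_iff, not_or] at hv₁ hv₂
  have labeling : ∀ a b, a ≠ b → ¬ CompAdj A a b → a ≠ u₁ → b ≠ u₂ → p a = p u₁ →
      (∀ w, A a w ↔ w = b) ∧ p a = p u₁ ∧ p b ≠ p u₂ := fun a b hab hnc ha₁ hb₂ hpa =>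
    have hout := hO.unique_out_of_not_compAdj hstar htight hnosink hab hnc ha₁ hb₂ hpa
    ⟨hout, hpa, hO.part_ne_of_unique_out hstar htight ha₁ hb₂ hpa hout⟩
  rcases hO.part_eq_or_part_eq_of_not_compAdj hstar hne hnc hv₁.1 hv₁.2 hv₂.1 hv₂.2 with h | h
  · exact Or.inl (labeling v₁ v₂ hne hnc hv₁.1 hv₂.2 h)
  · have hnc' : ¬ CompAdj A v₂ v₁ := fun hc => hnc ((compGraph A).adj_symm hc)
    exact Or.inr (labeling v₂ v₁ hne.symm hnc' hv₂.1 hv₁.2 h)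

/-- Let `D` be a tight multipartite tournament with no sinks, and suppose
`u₂` is the unique out-neighbor of `u₁`. Then for any anti-`{1,2}`-competing set `S` of
size 2 with `S ∩ {u₁,u₂} = ∅`: (1) the vertices of `S` can be labeled `v₁`, `v₂` so that
`v₂` is the unique out-neighbor of `v₁`; (2) with this labeling, `v₁` and `u₁` belong to
the same partite set, and `v₂` and `u₂` belong to distinct partite sets. -/
theorem stmt14 {V ι : Type*} [Fintype V] [Fintype ι]
    (A : V → V → Prop) (p : V → ι) (hD : IsMultipartiteTournament A p)
    (htight : IsTight A p) (hnosink : ∀ x : V, ∃ w, A x w)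
    (u₁ u₂ : V) (hstar : ∀ w, A u₁ w ↔ w = u₂) :
    ∀ v₁ v₂ : V, v₁ ≠ v₂ → ¬ (compGraph A).Adj v₁ v₂ →
      v₁ ∉ ({u₁, u₂} : Set V) → v₂ ∉ ({u₁, u₂} : Set V) →
      (((∀ w, A v₁ w ↔ w = v₂) ∧ p v₁ = p u₁ ∧ p v₂ ≠ p u₂) ∨
       ((∀ w, A v₂ w ↔ w = v₁) ∧ p v₂ = p u₁ ∧ p v₁ ≠ p u₂)) :=
  stmt14_general A p hD htight hnosink u₁ u₂ hstar
end
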